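/- arXiv:1902.05944 — 2 statements merged into one kernel-verified Lean document; each statement's English description precedes it below -/
import Mathlib

section
/- For every integer n ≥ 1, 10·∑_{k=1}^{n} F_k^3 = F_{3n+2} - (-1)^n·6·F_{n-1} + 5. -/
/-!
By Cassini's identity, `F (3k) = 5 F k ^ 3 + 3 (-1)^k F k`, so `10 F k ^ 3 = 2 F (3k) - 6 (-1)^k F k`.
Both terms telescope: `2 F (3k) = F (3k + 2) - F (3k - 1)` and
`(-1)^k F k = (-1)^k F (k - 1) - (-1)^(k-1) F (k - 2)`.
Over `Int.fib` the identity holds from `n = 0` on, since `F (-1) = 1`.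
-/

namespace Int

theorem fib_add_one_eq_fib_sub_one_add_fib (n : ℤ) : fib (n + 1) = fib (n - 1) + fib n := by
  simpa [show n - 1 + 2 = n + 1 by ring] using fib_add_two (n - 1)

theorem fib_add_three (n : ℤ) : fib (n + 3) = fib n + 2 * fib (n + 1) := by
  rw [show n + 3 = n + 1 + 2 by ring, fib_add_two, show n + 1 + 1 = n + 2 by ring, fib_add_two]
  ring

theorem fib_three_mul (n : ℤ) :
    fib (3 * n) = 5 * fib n ^ 3 + 3 * (-1) ^ n.natAbs * fib n := by
  have hpred : fib (2 * n - 1) = fib n ^ 2 + fib (n - 1) ^ 2 := by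
    simpa [show 2 * (n - 1) + 1 = 2 * n - 1 by ring] using fib_two_mul_add_one (n - 1)
  rw [show 3 * n = 2 * n + n by ring, fib_add, hpred, fib_two_mul,
    ← fib_succ_mul_fib_pred_sub_fib_sq, fib_add_one_eq_fib_sub_one_add_fib]
  ring

theorem ten_mul_sum_fib_pow_three (n : ℕ) :
    10 * ∑ k ∈ Finset.Icc 1 n, fib (k : ℤ) ^ 3 =
      fib (3 * n + 2) - (-1) ^ n * 6 * fib (n - 1) + 5 := by
  induction n with
  | zero => simp
  | succ n ih =>
    have hcube := fib_three_mul (n + 1)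
    have htelescope : fib (3 * (n + 1) + 2) = fib (3 * n + 2) + 2 * fib (3 * (n + 1)) := by
      rw [show 3 * ((n : ℤ) + 1) + 2 = 3 * n + 2 + 3 by ring, fib_add_three,
        show 3 * ((n : ℤ) + 1) = 3 * n + 2 + 1 by ring]
    rw [Finset.sum_Icc_succ_top (by omega), mul_add, ih]
    push_cast
    rw [htelescope, hcube, show ((n : ℤ) + 1).natAbs = n + 1 by omega, add_sub_cancel_right,
      fib_add_one_eq_fib_sub_one_add_fib (n : ℤ)]
    ring

end Int

theorem stmt_2 (n : ℕ) (hn : 1 ≤ n) :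
    10 * ∑ k ∈ Finset.Icc 1 n, (Nat.fib k : ℤ) ^ 3 =
      (Nat.fib (3 * n + 2) : ℤ) - (-1) ^ n * 6 * Nat.fib (n - 1) + 5 := by
  rw [← Int.fib_natCast, ← Int.fib_natCast, Nat.cast_sub hn]
  push_cast
  exact Int.ten_mul_sum_fib_pow_three n
end

section
/- For every integer n ≥ 1, 4·∑_{k=1}^{n} F_{k+1}^3 = F_{n+2}^3 + F_{n+1}^3 + (-1)^n·3·F_n - 2. -/
lemma cassini (n : ℕ) : (Nat.fib (n+1) : ℤ)^2 - Nat.fib (n+1) * Nat.fib n - (Nat.fib n : ℤ)^2 = (-1)^n := by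
  induction n with
  | zero => simp
  | succ m ih =>
    have h := Nat.fib_add_two (n := m)
    push_cast [h] at *
    ring_nf
    ring_nf at ih
    linarith

theorem stmt_8 (n : ℕ) (hn : 1 ≤ n) :
    4 * ∑ k ∈ Finset.Icc 1 n, (Nat.fib (k + 1) : ℤ) ^ 3 =
      (Nat.fib (n + 2) : ℤ) ^ 3 + (Nat.fib (n + 1) : ℤ) ^ 3 + (-1) ^ n * 3 * Nat.fib n - 2 := by
  induction n with
  | zero => omega
  | succ m ih =>
    rcases Nat.eq_zero_or_pos m with rfl | hm
    · norm_num [Finset.Icc_self]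
    · have ih' := ih hm
      rw [Finset.sum_Icc_succ_top (by omega), mul_add, ih']
      have hc := cassini (m + 1)
      have hf : (Nat.fib m : ℤ) = Nat.fib (m + 2) - Nat.fib (m + 1) := by
        rw [Nat.fib_add_two]; push_cast; ring
      have hf3 : (Nat.fib (m + 3) : ℤ) = Nat.fib (m + 1) + Nat.fib (m + 2) := by
        rw [show m + 3 = (m + 1) + 2 from rfl, Nat.fib_add_two]; push_cast; ring
      rw [show m + 1 + 2 = m + 3 from rfl, show m + 1 + 1 = m + 2 from rfl, hf3, hf]
      rw [show m + 1 + 1 = m + 2 from rfl] at hc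
      rw [pow_succ] at hc ⊢
      linear_combination 3 * (Nat.fib (m + 2) : ℤ) * hc
end
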